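/- arXiv:0803.3777 — 2 statements merged into one kernel-verified Lean document; each statement's English description precedes it below -/
import Mathlib

section
/- Let q = 3. Let H_s be an m×n real matrix with all entries in {0,1}, with exactly c ones per column and d ones per row; let L = H_sᵀ·H_s, λ₁ = cd, and let λ₂ < λ₁ satisfy v·L·vᵀ ≤ λ₂·‖v‖₂² for every v ∈ ℝⁿ with ⟨v, 𝟏⟩ = 0. For each row index j let I_j = { i : (H_s)_{j,i} = 1 }. For each i ∈ {1,…,n}, let f_i(0), f_i(1), f_i(2) be nonnegative reals with f_i(0) + f_i(1) + f_i(2) = 1, set x_i = f_i(1) + f_i(2), and assume that for every j and every ℓ ∈ I_j, Σ_{i ∈ I_j \ {ℓ}} x_i ≥ x_ℓ. Define S = 2 Σ_{i=1}^{n} ( 1 − Σ_{k=0}^{2} f_i(k) cos(2πk/3) ) and V = Σ_{i=1}^{n} ( Σ_{k=0}^{2} f_i(k)² + 2 Σ_{0≤k<ℓ≤2} f_i(k) f_i(ℓ) cos(2π(k−ℓ)/3) − 2 Σ_{k=0}^{2} f_i(k) cos(2πk/3) + 1 ). If V > 0, then S²/V ≥ 3·n·(2c − λ₂)/(λ₁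 − λ₂). (This is stronger than the bound (1 − cos(2π/3))²·n·(2c−λ₂)/(λ₁−λ₂) = (9/4)·n·(2c−λ₂)/(λ₁−λ₂) obtained from the general q-ary theorem.) -/
/-!
For `q = 3` the coordinate terms collapse: with `x_i = f_i(1) + f_i(2)` one gets
`S = 3 ∑ x_i` and `V = 3 ∑ (x_i² - f_i(1) f_i(2)) ≤ 3 ‖x‖²`. The check inequalities say that
on each check no `x_ℓ` exceeds the sum of the others, so `(∑_{I_j} x)² ≥ 2 ∑_{I_j} x²`; summing
over the checks gives `‖H_s x‖² ≥ 2c ‖x‖²`. Applying the `λ₂` bound to `n x - (∑ x) 𝟏`, which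
is orthogonal to `𝟏`, and using biregularity gives `n ‖H_s x‖² ≤ λ₂ (n ‖x‖² - (∑ x)²) + cd (∑ x)²`.
Together, `n (2c - λ₂) ‖x‖² ≤ (cd - λ₂) (∑ x)²`, and `S² / V ≥ 3 (∑ x)² / ‖x‖²` finishes.
-/

open Finset Matrix Real

section ZeroOneMatrix

variable {κ ι : Type*} {A : Matrix κ ι ℝ}

theorem mulVec_apply_eq_sum_filter [Fintype ι] (hA : ∀ j i, A j i = 0 ∨ A j i = 1)
    (x : ι → ℝ) (j : κ) :
    (A *ᵥ x) j = ∑ i ∈ univ.filter (fun i => A j i = 1), x i := by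
  rw [sum_filter, mulVec, dotProduct]
  refine sum_congr rfl fun i _ => ?_
  rcases hA j i with h | h <;> simp [h]

theorem vecMul_apply_eq_sum_filter [Fintype κ] (hA : ∀ j i, A j i = 0 ∨ A j i = 1)
    (v : κ → ℝ) (i : ι) :
    (v ᵥ* A) i = ∑ j ∈ univ.filter (fun j => A j i = 1), v j := by
  rw [sum_filter, vecMul, dotProduct]
  refine sum_congr rfl fun j _ => ?_
  rcases hA j i with h | h <;> simp [h]

theorem mulVec_one_of_card_filter [Fintype ι] (hA : ∀ j i, A j i = 0 ∨ A j i = 1) {d : ℕ}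
    (hrow : ∀ j, (univ.filter (fun i => A j i = 1)).card = d) : A *ᵥ 1 = (d : ℝ) • 1 := by
  ext j
  simp [mulVec_apply_eq_sum_filter hA, hrow]

theorem one_vecMul_of_card_filter [Fintype κ] (hA : ∀ j i, A j i = 0 ∨ A j i = 1) {c : ℕ}
    (hcol : ∀ i, (univ.filter (fun j => A j i = 1)).card = c) : 1 ᵥ* A = (c : ℝ) • 1 := by
  ext i
  simp [vecMul_apply_eq_sum_filter hA, hcol]

end ZeroOneMatrix

theorem two_mul_sum_sq_le_sq_sum {ι : Type*} [DecidableEq ι] {F : Finset ι} {x : ι → ℝ}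
    (hx : ∀ i ∈ F, 0 ≤ x i) (h : ∀ ℓ ∈ F, x ℓ ≤ ∑ i ∈ F.erase ℓ, x i) :
    2 * ∑ i ∈ F, x i ^ 2 ≤ (∑ i ∈ F, x i) ^ 2 := by
  have hmax : ∀ ℓ ∈ F, 2 * x ℓ ≤ ∑ i ∈ F, x i := fun ℓ hℓ => by
    linarith [h ℓ hℓ, add_sum_erase F x hℓ]
  calc 2 * ∑ i ∈ F, x i ^ 2 = ∑ i ∈ F, x i * (2 * x i) := by
        rw [mul_sum]; exact sum_congr rfl fun i _ => by ring
    _ ≤ ∑ i ∈ F, x i * ∑ k ∈ F, x k :=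
        sum_le_sum fun i hi => mul_le_mul_of_nonneg_left (hmax i hi) (hx i hi)
    _ = (∑ i ∈ F, x i) ^ 2 := by rw [← sum_mul, sq]

section Spectral

variable {κ ι : Type*} [Fintype κ] [Fintype ι]

theorem dotProduct_transpose_mul_mulVec (A : Matrix κ ι ℝ) (v : ι → ℝ) :
    v ⬝ᵥ ((Aᵀ * A) *ᵥ v) = (A *ᵥ v) ⬝ᵥ (A *ᵥ v) := by
  rw [← mulVec_mulVec, dotProduct_mulVec, vecMul_transpose]

theorem two_mul_dotProduct_self_le_mulVec_dotProduct_mulVec [DecidableEq ι] {A : Matrix κ ι ℝ}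
    (hA : ∀ j i, A j i = 0 ∨ A j i = 1) {c : ℝ} (hcol : 1 ᵥ* A = c • 1) {x : ι → ℝ}
    (hx : ∀ i, 0 ≤ x i)
    (hcheck : ∀ j, ∀ ℓ, A j ℓ = 1 →
      x ℓ ≤ ∑ i ∈ (univ.filter (fun i => A j i = 1)).erase ℓ, x i) :
    2 * c * (x ⬝ᵥ x) ≤ (A *ᵥ x) ⬝ᵥ (A *ᵥ x) := by
  have hsq : 1 ⬝ᵥ (A *ᵥ fun i => x i ^ 2) = c * (x ⬝ᵥ x) := by
    rw [dotProduct_mulVec, hcol, smul_dotProduct, one_dotProduct, smul_eq_mul, dotProduct]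
    simp only [sq]
  rw [mul_assoc, ← hsq, one_dotProduct, mul_sum, dotProduct]
  refine sum_le_sum fun j _ => ?_
  rw [mulVec_apply_eq_sum_filter hA, mulVec_apply_eq_sum_filter hA, ← sq]
  exact two_mul_sum_sq_le_sq_sum (fun i _ => hx i) fun ℓ hℓ => hcheck j ℓ (mem_filter.1 hℓ).2

theorem card_mul_dotProduct_mulVec_self_le {A : Matrix κ ι ℝ} {c d lam : ℝ}
    (hrow : A *ᵥ 1 = d • 1) (hcol : 1 ᵥ* A = c • 1)
    (hlam : ∀ v : ι → ℝ, ∑ i, v i = 0 → v ⬝ᵥ ((Aᵀ * A) *ᵥ v) ≤ lam * ∑ i, v i ^ 2)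
    (x : ι → ℝ) :
    Fintype.card ι * ((A *ᵥ x) ⬝ᵥ (A *ᵥ x)) ≤
      lam * (Fintype.card ι * (x ⬝ᵥ x) - (∑ i, x i) ^ 2) + c * d * (∑ i, x i) ^ 2 := by
  set n : ℝ := (Fintype.card ι : ℝ)
  set X := ∑ i, x i with hX
  have hmd : Fintype.card κ * d = n * c := by
    have := dotProduct_mulVec (1 : κ → ℝ) A 1
    simp [hrow, hcol] at this
    linarith
  have hAx : 1 ⬝ᵥ (A *ᵥ x) = c * X := by
    rw [dotProduct_mulVec, hcol, smul_dotProduct, one_dotProduct, smul_eq_mul]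
  set v : ι → ℝ := n • x - X • 1
  have hv : ∑ i, v i = 0 := by
    simp [v, sum_sub_distrib, ← mul_sum, X, n]
  have hAv : A *ᵥ v = n • (A *ᵥ x) - (X * d) • 1 := by
    simp [v, mulVec_sub, mulVec_smul, hrow, smul_smul, mul_comm]
  have hQv : (A *ᵥ v) ⬝ᵥ (A *ᵥ v) = n * (n * ((A *ᵥ x) ⬝ᵥ (A *ᵥ x)) - c * d * X ^ 2) := by
    simp only [hAv, dotProduct_sub, sub_dotProduct, dotProduct_smul, smul_dotProduct,
      dotProduct_comm _ (1 : κ → ℝ), hAx, one_dotProduct_one, smul_eq_mul]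
    linear_combination (X ^ 2 * d) * hmd
  have hvv : ∑ i, v i ^ 2 = n * (n * (x ⬝ᵥ x) - X ^ 2) := by
    rw [show ∑ i, v i ^ 2 = v ⬝ᵥ v by simp [dotProduct, sq]]
    simp only [v, dotProduct_sub, sub_dotProduct, dotProduct_smul, smul_dotProduct,
      dotProduct_comm _ (1 : ι → ℝ), smul_eq_mul]
    rw [one_dotProduct_one, one_dotProduct, ← hX]
    ring
  have key := hlam v hv
  rw [dotProduct_transpose_mul_mulVec, hQv, hvv] at key
  rcases (Fintype.card ι).eq_zero_or_pos with hι | hι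
  · have : IsEmpty ι := Fintype.card_eq_zero_iff.mp hι
    simp [n, X]
  · have hn : 0 < n := Nat.cast_pos.mpr hι
    refine le_of_mul_le_mul_left ?_ hn
    linarith

end Spectral

section TernaryPSK

theorem cos_two_pi_div_three : cos (2 * π / 3) = -(1 / 2) := by
  rw [show 2 * π / 3 = π - π / 3 by ring, cos_pi_sub, cos_pi_div_three]

theorem cos_four_pi_div_three : cos (4 * π / 3) = -(1 / 2) := by
  rw [show 4 * π / 3 = π / 3 + π by ring, cos_add_pi, cos_pi_div_three]

theorem sum_range_three_mul_cos (f : ℕ → ℝ) :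
    ∑ k ∈ range 3, f k * cos (2 * π * k / 3) = f 0 - (f 1 + f 2) / 2 := by
  simp only [sum_range_succ, sum_range_zero, Nat.cast_zero, Nat.cast_one, Nat.cast_ofNat]
  rw [show 2 * π * 0 / 3 = 0 by ring, show 2 * π * 1 / 3 = 2 * π / 3 by ring,
    show 2 * π * 2 / 3 = 4 * π / 3 by ring, cos_zero, cos_two_pi_div_three,
    cos_four_pi_div_three]
  ring

theorem sum_range_three_sum_range_mul_cos (f : ℕ → ℝ) :
    ∑ l ∈ range 3, ∑ k ∈ range l, f k * f l * cos (2 * π * ((k : ℝ) - l) / 3) =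
      -(f 0 * f 1 + f 0 * f 2 + f 1 * f 2) / 2 := by
  simp only [sum_range_succ, sum_range_zero, Nat.cast_zero, Nat.cast_one, Nat.cast_ofNat]
  rw [show 2 * π * ((0 : ℝ) - 1) / 3 = -(2 * π / 3) by ring,
    show 2 * π * ((0 : ℝ) - 2) / 3 = -(4 * π / 3) by ring,
    show 2 * π * ((1 : ℝ) - 2) / 3 = -(2 * π / 3) by ring, cos_neg, cos_neg,
    cos_two_pi_div_three, cos_four_pi_div_three]
  ring

variable {f : ℕ → ℝ}

theorem ternaryPSK_distance_summand (hf : f 0 + f 1 + f 2 = 1) :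
    2 * (1 - ∑ k ∈ range 3, f k * cos (2 * π * k / 3)) = 3 * (f 1 + f 2) := by
  rw [sum_range_three_mul_cos]
  linear_combination -2 * hf

theorem ternaryPSK_energy_summand (hf : f 0 + f 1 + f 2 = 1) :
    ∑ k ∈ range 3, f k ^ 2
        + 2 * ∑ l ∈ range 3, ∑ k ∈ range l, f k * f l * cos (2 * π * ((k : ℝ) - l) / 3)
        - 2 * ∑ k ∈ range 3, f k * cos (2 * π * k / 3) + 1 =
      3 * ((f 1 + f 2) ^ 2 - f 1 * f 2) := by
  rw [sum_range_three_mul_cos, sum_range_three_sum_range_mul_cos]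
  simp only [sum_range_succ, sum_range_zero]
  linear_combination (f 0 - 2 * f 1 - 2 * f 2 - 1) * hf

end TernaryPSK

theorem three_mul_div_le_sq_div {a D X T V : ℝ} (hD : 0 < D) (hV : 0 < V) (hVT : V ≤ 3 * T)
    (h : a * T ≤ D * X ^ 2) : 3 * (a / D) ≤ (3 * X) ^ 2 / V := by
  rcases le_or_gt a 0 with ha | ha
  · calc 3 * (a / D) ≤ 0 := by have := div_nonpos_of_nonpos_of_nonneg ha hD.le; linarith
      _ ≤ (3 * X) ^ 2 / V := by positivity
  · rw [le_div_iff₀ hV, mul_div_assoc', div_mul_eq_mul_div, div_le_iff₀ hD]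
    linarith [mul_le_mul_of_nonneg_left hVT ha.le]

/-- Eigenvalue bound for ternary (`q = 3`) PSK over AWGN: with `Hs` the 0–1 support
matrix of a `(c,d)`-regular parity-check matrix, `L = Hsᵀ Hs`, `λ₁ = cd`, and
`λ₂ < λ₁` an upper bound for the Rayleigh quotient of `L` on vectors orthogonal to the
all-ones vector, any normalized pseudocodeword matrix `(f i k)` (rows nonnegative,
summing to 1, satisfying the per-check inequalities on `x_i = f i 1 + f i 2`) with
`V > 0` has squared pseudodistance `S²/V ≥ 3 n (2c − λ₂)/(λ₁ − λ₂)`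
(stronger than the constant `(1 − cos(2π/3))² = 9/4` from the general theorem). -/
theorem min_pseudodistance_eigenvalue_bound_ternary {m n : ℕ} (c d : ℕ)
    (Hs : Matrix (Fin m) (Fin n) ℝ)
    (h01 : ∀ j i, Hs j i = 0 ∨ Hs j i = 1)
    (hcol : ∀ i, (univ.filter (fun j => Hs j i = 1)).card = c)
    (hrow : ∀ j, (univ.filter (fun i => Hs j i = 1)).card = d)
    (lam2 : ℝ) (hlam2 : lam2 < (c : ℝ) * d)
    (h2 : ∀ v : Fin n → ℝ, ∑ i, v i = 0 →
      v ⬝ᵥ ((Hsᵀ * Hs) *ᵥ v) ≤ lam2 * ∑ i, (v i) ^ 2)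
    (f : Fin n → ℕ → ℝ)
    (hf0 : ∀ i, ∀ k < 3, 0 ≤ f i k)
    (hf1 : ∀ i, f i 0 + f i 1 + f i 2 = 1)
    (x : Fin n → ℝ)
    (hx : ∀ i, x i = f i 1 + f i 2)
    (hcheck : ∀ j, ∀ ℓ, Hs j ℓ = 1 →
      ∑ i ∈ (univ.filter (fun i => Hs j i = 1)).erase ℓ, x i ≥ x ℓ)
    (S V : ℝ)
    (hS : S = 2 * ∑ i, (1 - ∑ k ∈ Finset.range 3, f i k * Real.cos (2 * π * k / 3)))
    (hV : V = ∑ i, (∑ k ∈ Finset.range 3, (f i k) ^ 2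
        + 2 * ∑ l ∈ Finset.range 3, ∑ k ∈ Finset.range l,
            f i k * f i l * Real.cos (2 * π * ((k : ℝ) - l) / 3)
        - 2 * ∑ k ∈ Finset.range 3, f i k * Real.cos (2 * π * k / 3) + 1))
    (hVpos : 0 < V) :
    S ^ 2 / V ≥ 3 * (n * (2 * c - lam2) / ((c : ℝ) * d - lam2)) := by
  have hf12 : ∀ i, 0 ≤ f i 1 ∧ 0 ≤ f i 2 := fun i =>
    ⟨hf0 i 1 (by norm_num), hf0 i 2 (by norm_num)⟩
  have hx0 : ∀ i, 0 ≤ x i := fun i => by rw [hx]; linarith [hf12 i]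
  have hS3 : S = 3 * ∑ i, x i := by
    rw [hS, mul_sum, mul_sum]
    exact sum_congr rfl fun i _ => by rw [ternaryPSK_distance_summand (hf1 i), hx]
  have hV3 : V ≤ 3 * (x ⬝ᵥ x) := by
    rw [hV, dotProduct, mul_sum]
    refine sum_le_sum fun i _ => ?_
    rw [ternaryPSK_energy_summand (hf1 i), hx i]
    linarith [mul_nonneg (hf12 i).1 (hf12 i).2]
  have hcol' := one_vecMul_of_card_filter h01 hcol
  have hlow := two_mul_dotProduct_self_le_mulVec_dotProduct_mulVec h01 hcol' hx0 hcheck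
  have hup := card_mul_dotProduct_mulVec_self_le (mulVec_one_of_card_filter h01 hrow) hcol' h2 x
  rw [Fintype.card_fin] at hup
  rw [ge_iff_le, hS3]
  refine three_mul_div_le_sq_div (by linarith) hVpos hV3 ?_
  linarith [mul_le_mul_of_nonneg_left hlow (Nat.cast_nonneg n : (0 : ℝ) ≤ n)]
end

section
/- Let K be a p×n real matrix and define K₁ = { y ∈ ℝ^{n×n} : y ≥ 0 entrywise, Σ_{i,i'} y_{(i,i')} = 1, and every row and every column v of y satisfies K·vᵀ ≥ 0 entrywise }, and f'(y) = Σ_{i=1}^{n} y_{(i,i)}. Fix an integer q ≥ 2 and, for each i ∈ {1,…,n}, nonnegative reals f_i(0), …, f_i(q−1) with Σ_{k=0}^{q−1} f_i(k) = 1; set x_i = Σ_{k=1}^{q−1} f_i(k), and define S = 2 Σ_{i=1}^{n} ( 1 − Σ_{k=0}^{q−1} f_i(k) cos(2πk/q) ) and V = Σ_{i=1}^{n} ( Σ_{k=0}^{q−1} f_i(k)² + 2 Σ_{0≤k<ℓ≤q−1} f_i(k) f_i(ℓ) cos(2π(k−ℓ)/q) − 2 Σ_{k=0}^{q−1} f_i(k)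 cos(2πk/q) + 1 ). Assume V > 0 and K·xᵀ ≥ 0 entrywise, and let μ = sup { f'(y) : y ∈ K₁ }. Then μ > 0 and S²/V ≥ (1 − cos(2π/q))² / μ. -/
/-!
Write `ω_k = exp (2πik/q)`. The `i`-th summand of `V` is
`|1 - ∑_k f_i(k) ω_k|² = |∑_{k ≥ 1} f_i(k) (1 - ω_k)|² ≤ 4 x_i²`, so `V ≤ 4 ∑ x_i²`; and since
`1 - cos (2πk/q) ≥ 1 - cos (2π/q)` for `1 ≤ k < q`, also `S ≥ 2 (1 - cos (2π/q)) ∑ x_i`.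
As `x ≥ 0` and `K x ≥ 0`, the rank-one matrix `x xᵀ / (∑ x_i)²` lies in `K₁`, whence
`μ ≥ ∑ x_i² / (∑ x_i)² > 0`, and the three estimates combine to the bound.
-/

open Finset Matrix Real

theorem Finset.sum_range_sum_range_of_symm {M : Type*} [AddCommMonoid M] (g : ℕ → ℕ → M)
    (hg : ∀ k l, g k l = g l k) (s : ℕ) :
    ∑ l ∈ range s, ∑ k ∈ range s, g k l
      = ∑ k ∈ range s, g k k + 2 • ∑ l ∈ range s, ∑ k ∈ range l, g k l := by
  induction s with
  | zero => simp
  | succ s ih =>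
    have hrow : ∑ l ∈ range s, g s l = ∑ k ∈ range s, g k s := sum_congr rfl fun l _ => hg s l
    simp only [sum_range_succ, sum_add_distrib, ih, hrow, smul_add, two_nsmul]
    abel

theorem normSq_one_sub_sum_mul_exp (s : ℕ) (f θ : ℕ → ℝ) :
    Complex.normSq (1 - ∑ k ∈ range s, (f k : ℂ) * Complex.exp (θ k * Complex.I))
      = ∑ k ∈ range s, f k ^ 2
        + 2 * ∑ l ∈ range s, ∑ k ∈ range l, f k * f l * cos (θ k - θ l)
        - 2 * ∑ k ∈ range s, f k * cos (θ k) + 1 := by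
  set A := ∑ k ∈ range s, f k * cos (θ k)
  set B := ∑ k ∈ range s, f k * sin (θ k)
  have hnormSq : Complex.normSq (1 - ∑ k ∈ range s, (f k : ℂ) * Complex.exp (θ k * Complex.I))
      = (1 - A) ^ 2 + B ^ 2 := by
    simp only [Complex.normSq_apply, Complex.sub_re, Complex.sub_im, Complex.one_re,
      Complex.one_im, Complex.re_sum, Complex.im_sum, Complex.re_ofReal_mul,
      Complex.im_ofReal_mul, Complex.exp_ofReal_mul_I_re, Complex.exp_ofReal_mul_I_im, A, B]
    ring
  have hAB : A ^ 2 + B ^ 2 = ∑ l ∈ range s, ∑ k ∈ range s, f k * f l * cos (θ k - θ l) := by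
    simp only [A, B, sq, sum_mul_sum, ← sum_add_distrib, cos_sub]
    exact sum_comm.trans (sum_congr rfl fun _ _ => sum_congr rfl fun _ _ => by ring)
  have hdiag := sum_range_sum_range_of_symm (fun k l => f k * f l * cos (θ k - θ l))
    (fun k l => by rw [← cos_neg, neg_sub]; ring) s
  simp only [sub_self, cos_zero, mul_one, ← sq, nsmul_eq_mul, Nat.cast_ofNat] at hdiag
  rw [hnormSq]
  linear_combination hAB.trans hdiag

theorem norm_one_sub_sum_mul_exp_le {s : ℕ} {f θ : ℕ → ℝ}
    (hf0 : ∀ k < s, 0 ≤ f k) (hf1 : ∑ k ∈ range s, f k = 1) (hθ : θ 0 = 0) :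
    ‖1 - ∑ k ∈ range s, (f k : ℂ) * Complex.exp (θ k * Complex.I)‖
      ≤ 2 * ∑ k ∈ Ico 1 s, f k := by
  set e : ℕ → ℂ := fun k => Complex.exp (θ k * Complex.I)
  have hone : (1 : ℂ) = ∑ k ∈ range s, (f k : ℂ) := by exact_mod_cast hf1.symm
  have hsum : 1 - ∑ k ∈ range s, (f k : ℂ) * e k = ∑ k ∈ Ico 1 s, (f k : ℂ) * (1 - e k) := by
    calc 1 - ∑ k ∈ range s, (f k : ℂ) * e k = ∑ k ∈ range s, (f k : ℂ) * (1 - e k) := by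
          simp only [mul_sub, mul_one, sum_sub_distrib, ← hone]
      _ = ∑ k ∈ Ico 1 s, (f k : ℂ) * (1 - e k) := by
          refine (sum_subset (fun k hk => mem_range.2 (mem_Ico.1 hk).2) fun k hks hk => ?_).symm
          obtain rfl : k = 0 := by simp only [mem_range, mem_Ico, not_and, not_lt] at hks hk; omega
          simp [e, hθ]
  rw [hsum, mul_sum]
  refine (norm_sum_le _ _).trans (sum_le_sum fun k hk => ?_)
  have hfk := hf0 k (mem_Ico.1 hk).2
  have he : ‖1 - e k‖ ≤ 2 :=
    (norm_sub_le _ _).trans (by simp [e, Complex.norm_exp_ofReal_mul_I]; norm_num)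
  rw [norm_mul, Complex.norm_real, Real.norm_of_nonneg hfk, mul_comm]
  exact mul_le_mul_of_nonneg_right he hfk

theorem cos_two_pi_mul_div_le_cos_two_pi_div {q k : ℕ} (hk : 1 ≤ k) (hkq : k < q) :
    cos (2 * π * k / q) ≤ cos (2 * π / q) := by
  have hq0 : (0 : ℝ) < q := Nat.cast_pos.2 (by omega)
  have hk' : (1 : ℝ) ≤ k := by exact_mod_cast hk
  have hkq' : (k : ℝ) + 1 ≤ q := by exact_mod_cast hkq
  have h0 : 0 ≤ 2 * π / q := by positivity
  have hlow : 2 * π / q ≤ 2 * π * k / q :=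
    div_le_div_of_nonneg_right (le_mul_of_one_le_right (by positivity) hk') hq0.le
  have hhigh : 2 * π / q ≤ 2 * π - 2 * π * k / q := by
    rw [le_sub_iff_add_le, ← add_div, div_le_iff₀ hq0]
    nlinarith [pi_pos]
  rcases le_total (2 * π * k / q) π with hπ | hπ
  · exact cos_le_cos_of_nonneg_of_le_pi h0 hπ hlow
  · rw [← cos_two_pi_sub]
    exact cos_le_cos_of_nonneg_of_le_pi h0 (by linarith) hhigh

theorem one_sub_cos_two_pi_div_mul_le {q : ℕ} {f : ℕ → ℝ} (hf0 : ∀ k < q, 0 ≤ f k)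
    (hf1 : ∑ k ∈ range q, f k = 1) :
    (1 - cos (2 * π / q)) * ∑ k ∈ Ico 1 q, f k
      ≤ 1 - ∑ k ∈ range q, f k * cos (2 * π * k / q) := by
  calc (1 - cos (2 * π / q)) * ∑ k ∈ Ico 1 q, f k
      ≤ ∑ k ∈ Ico 1 q, f k * (1 - cos (2 * π * k / q)) := by
        rw [mul_sum]
        refine sum_le_sum fun k hk => ?_
        obtain ⟨hk1, hkq⟩ := mem_Ico.1 hk
        rw [mul_comm]
        exact mul_le_mul_of_nonneg_left
          (sub_le_sub_left (cos_two_pi_mul_div_le_cos_two_pi_div hk1 hkq) 1) (hf0 k hkq)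
    _ ≤ ∑ k ∈ range q, f k * (1 - cos (2 * π * k / q)) :=
        sum_le_sum_of_subset_of_nonneg (fun k hk => mem_range.2 (mem_Ico.1 hk).2)
          fun k hk _ => mul_nonneg (hf0 k (mem_range.1 hk)) (sub_nonneg.2 (cos_le_one _))
    _ = 1 - ∑ k ∈ range q, f k * cos (2 * π * k / q) := by
        simp only [mul_sub, mul_one, sum_sub_distrib, hf1]

theorem psk_variance_summand_le {q : ℕ} {f : ℕ → ℝ} (hf0 : ∀ k < q, 0 ≤ f k)
    (hf1 : ∑ k ∈ range q, f k = 1) :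
    ∑ k ∈ range q, f k ^ 2
        + 2 * ∑ l ∈ range q, ∑ k ∈ range l, f k * f l * cos (2 * π * ((k : ℝ) - l) / q)
        - 2 * ∑ k ∈ range q, f k * cos (2 * π * k / q) + 1
      ≤ 4 * (∑ k ∈ Ico 1 q, f k) ^ 2 := by
  simp only [mul_sub, sub_div]
  rw [← normSq_one_sub_sum_mul_exp q f (fun k => 2 * π * k / q), Complex.normSq_eq_norm_sq]
  have hnorm := norm_one_sub_sum_mul_exp_le hf0 hf1 (θ := fun k => 2 * π * k / q) (by simp)
  calc _ ≤ (2 * ∑ k ∈ Ico 1 q, f k) ^ 2 := by gcongr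
    _ = 4 * (∑ k ∈ Ico 1 q, f k) ^ 2 := by ring

section Polytope

variable {m ι : Type*} [Fintype ι]

def pseudocodewordPolytope (K : Matrix m ι ℝ) : Set (Matrix ι ι ℝ) :=
  {y | (∀ i i', 0 ≤ y i i') ∧ (∑ i, ∑ i', y i i' = 1) ∧
    (∀ i, (∀ j, 0 ≤ (K *ᵥ (fun i' => y i i')) j) ∧ (∀ j, 0 ≤ (K *ᵥ (fun i' => y i' i)) j))}

theorem bddAbove_trace_image_pseudocodewordPolytope (K : Matrix m ι ℝ) :
    BddAbove (trace '' pseudocodewordPolytope K) := by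
  refine ⟨1, ?_⟩
  rintro _ ⟨y, ⟨hy0, hy1, -⟩, rfl⟩
  calc trace y = ∑ i, y i i := rfl
    _ ≤ ∑ i, ∑ i', y i i' := sum_le_sum fun i _ => single_le_sum (fun i' _ => hy0 i i') (mem_univ i)
    _ = 1 := hy1

theorem smul_vecMulVec_self_mem_pseudocodewordPolytope {K : Matrix m ι ℝ} {x : ι → ℝ}
    (hx0 : ∀ i, 0 ≤ x i) (hKx : ∀ j, 0 ≤ (K *ᵥ x) j) (hX : ∑ i, x i ≠ 0) :
    ((∑ i, x i) ^ 2)⁻¹ • vecMulVec x x ∈ pseudocodewordPolytope K := by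
  set c := ((∑ i, x i) ^ 2)⁻¹
  have hc : 0 ≤ c := by positivity
  have hrow : ∀ i, (fun i' => (c • vecMulVec x x) i i') = (c * x i) • x :=
    fun i => funext fun i' => by
      simp only [Matrix.smul_apply, vecMulVec_apply, Pi.smul_apply, smul_eq_mul]; ring
  have hcol : ∀ i, (fun i' => (c • vecMulVec x x) i' i) = (c * x i) • x :=
    fun i => funext fun i' => by
      simp only [Matrix.smul_apply, vecMulVec_apply, Pi.smul_apply, smul_eq_mul]; ring
  have hK : ∀ i j, 0 ≤ (K *ᵥ ((c * x i) • x)) j := fun i j => by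
    rw [mulVec_smul]; exact mul_nonneg (mul_nonneg hc (hx0 i)) (hKx j)
  refine ⟨fun i i' => mul_nonneg hc (mul_nonneg (hx0 i) (hx0 i')), ?_, fun i => ?_⟩
  · simp only [Matrix.smul_apply, vecMulVec_apply, smul_eq_mul, ← mul_sum, ← sum_mul, ← sq]
    exact inv_mul_cancel₀ (pow_ne_zero 2 hX)
  · rw [hrow, hcol]
    exact ⟨hK i, hK i⟩

end Polytope

theorem lp_lower_bound_general {p n q : ℕ}
    (K : Matrix (Fin p) (Fin n) ℝ)
    (f : Fin n → ℕ → ℝ)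
    (hf0 : ∀ i, ∀ k < q, 0 ≤ f i k)
    (hf1 : ∀ i, ∑ k ∈ Finset.range q, f i k = 1)
    (x : Fin n → ℝ)
    (hx : ∀ i, x i = ∑ k ∈ Finset.Ico 1 q, f i k)
    (hKx : ∀ j, 0 ≤ (K *ᵥ x) j)
    (S V : ℝ)
    (hS : S = 2 * ∑ i, (1 - ∑ k ∈ Finset.range q, f i k * Real.cos (2 * π * k / q)))
    (hV : V = ∑ i, (∑ k ∈ Finset.range q, (f i k) ^ 2
        + 2 * ∑ l ∈ Finset.range q, ∑ k ∈ Finset.range l,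
            f i k * f i l * Real.cos (2 * π * ((k : ℝ) - l) / q)
        - 2 * ∑ k ∈ Finset.range q, f i k * Real.cos (2 * π * k / q) + 1))
    (hVpos : 0 < V)
    (K1 : Set (Matrix (Fin n) (Fin n) ℝ))
    (hK1 : K1 = {y | (∀ i i', 0 ≤ y i i') ∧
        (∑ i, ∑ i', y i i' = 1) ∧
        (∀ i, (∀ j, 0 ≤ (K *ᵥ (fun i' => y i i')) j) ∧
              (∀ j, 0 ≤ (K *ᵥ (fun i' => y i' i)) j))})
    (μ : ℝ)
    (hμ : μ = sSup ((fun y : Matrix (Fin n) (Fin n) ℝ => ∑ i, y i i) '' K1)) :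
    0 < μ ∧ S ^ 2 / V ≥ (1 - Real.cos (2 * π / q)) ^ 2 / μ := by
  set c := 1 - cos (2 * π / q)
  set X := ∑ i, x i
  set T := ∑ i, x i ^ 2
  have hx0 : ∀ i, 0 ≤ x i := fun i => hx i ▸ sum_nonneg fun k hk => hf0 i k (mem_Ico.1 hk).2
  have hVT : V ≤ 4 * T := by
    rw [hV, mul_sum]
    exact sum_le_sum fun i _ => hx i ▸ psk_variance_summand_le (hf0 i) (hf1 i)
  have hSX : 2 * c * X ≤ S := by
    rw [hS, mul_assoc, mul_sum]
    gcongr with i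
    exact hx i ▸ one_sub_cos_two_pi_div_mul_le (hf0 i) (hf1 i)
  have hT : 0 < T := by linarith
  have hX : 0 < X := by
    have hTX : T ≤ X ^ 2 := sum_sq_le_sq_sum_of_nonneg fun i _ => hx0 i
    have hX0 : 0 ≤ X := sum_nonneg fun i _ => hx0 i
    nlinarith
  have hTμ : T / X ^ 2 ≤ μ := by
    rw [hμ, hK1]
    refine le_csSup (bddAbove_trace_image_pseudocodewordPolytope K)
      ⟨_, smul_vecMulVec_self_mem_pseudocodewordPolytope hx0 hKx hX.ne', ?_⟩
    simp only [Matrix.smul_apply, vecMulVec_apply, smul_eq_mul, ← sq, ← mul_sum, T, X,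
      div_eq_inv_mul]
  have hμ0 : 0 < μ := (div_pos hT (pow_pos hX 2)).trans_le hTμ
  refine ⟨hμ0, ?_⟩
  have hc : 0 ≤ c := sub_nonneg.2 (cos_le_one _)
  calc c ^ 2 / μ ≤ c ^ 2 / (T / X ^ 2) := by gcongr
    _ = (2 * c * X) ^ 2 / (4 * T) := by field_simp; ring
    _ ≤ S ^ 2 / V := by gcongr

/-- Linear-programming lower bound on the squared pseudodistance for `q`-ary PSK over
AWGN: let `K` be the matrix encoding the per-check pseudocodeword inequalities, `K₁`
the polytope of entrywise-nonnegative `n × n` matrices with total entry sum `1` all of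
whose rows and columns `v` satisfy `K v ≥ 0`, and `μ = sup { ∑_i y i i : y ∈ K₁ }`.
For any normalized pseudocodeword matrix `(f i k)` with `x_i = ∑_{1 ≤ k < q} f i k`
satisfying `K x ≥ 0` and `V > 0`, we have `μ > 0` and
`S²/V ≥ (1 − cos(2π/q))² / μ`. -/
theorem lp_lower_bound {p n q : ℕ} (hq : 2 ≤ q)
    (K : Matrix (Fin p) (Fin n) ℝ)
    (f : Fin n → ℕ → ℝ)
    (hf0 : ∀ i, ∀ k < q, 0 ≤ f i k)
    (hf1 : ∀ i, ∑ k ∈ Finset.range q, f i k = 1)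
    (x : Fin n → ℝ)
    (hx : ∀ i, x i = ∑ k ∈ Finset.Ico 1 q, f i k)
    (hKx : ∀ j, 0 ≤ (K *ᵥ x) j)
    (S V : ℝ)
    (hS : S = 2 * ∑ i, (1 - ∑ k ∈ Finset.range q, f i k * Real.cos (2 * π * k / q)))
    (hV : V = ∑ i, (∑ k ∈ Finset.range q, (f i k) ^ 2
        + 2 * ∑ l ∈ Finset.range q, ∑ k ∈ Finset.range l,
            f i k * f i l * Real.cos (2 * π * ((k : ℝ) - l) / q)
        - 2 * ∑ k ∈ Finset.range q, f i k * Real.cos (2 * π * k / q) + 1))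
    (hVpos : 0 < V)
    (K1 : Set (Matrix (Fin n) (Fin n) ℝ))
    (hK1 : K1 = {y | (∀ i i', 0 ≤ y i i') ∧
        (∑ i, ∑ i', y i i' = 1) ∧
        (∀ i, (∀ j, 0 ≤ (K *ᵥ (fun i' => y i i')) j) ∧
              (∀ j, 0 ≤ (K *ᵥ (fun i' => y i' i)) j))})
    (μ : ℝ)
    (hμ : μ = sSup ((fun y : Matrix (Fin n) (Fin n) ℝ => ∑ i, y i i) '' K1)) :
    0 < μ ∧ S ^ 2 / V ≥ (1 - Real.cos (2 * π / q)) ^ 2 / μ :=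
  lp_lower_bound_general K f hf0 hf1 x hx hKx S V hS hV hVpos K1 hK1 μ hμ
end
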